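/- arXiv:2304.03097 — 6 statements merged into one kernel-verified Lean document; each statement's English description precedes it below -/
import Mathlib

section
/- If S is a thickly syndetic subset of the integers and p_1,...,p_d are polynomials with integer coefficients satisfying p_i(0)=0, then the set {(m,n) ∈ ℤ² : m+p_1(n), m+p_2(n), ..., m+p_d(n) ∈ S} is thickly syndetic in ℤ². -/
/-- A subset of ℤ is syndetic if it has bounded gaps. -/
def Syndetic (S : Set ℤ) : Prop :=
  ∃ N : ℕ, ∀ m : ℤ, ∃ i : ℕ, i ≤ N ∧ m + i ∈ S

/-- A subset of ℤ is thickly syndetic if for every N, the set of starting positions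
of runs of N consecutive integers contained in S is syndetic. -/
def ThicklySyndetic (S : Set ℤ) : Prop :=
  ∀ N : ℕ, Syndetic {m : ℤ | ∀ i : ℕ, i < N → m + i ∈ S}

/-- A subset of ℤ² is syndetic if finitely many translates of it cover ℤ². -/
def Syndetic2 (S : Set (ℤ × ℤ)) : Prop :=
  ∃ F : Finset (ℤ × ℤ), ∀ v : ℤ × ℤ, ∃ e ∈ F, v + e ∈ S

/-- A subset of ℤ² is thickly syndetic if for every N, the set of positions where an
N × N block contained in S begins is syndetic in ℤ². -/
def ThicklySyndetic2 (S : Set (ℤ × ℤ)) : Prop :=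
  ∀ N : ℕ, Syndetic2 {v : ℤ × ℤ | ∀ i j : ℕ, i < N → j < N → (v.1 + i, v.2 + j) ∈ S}

/-!
A thickly syndetic set `S` has the following uniformity: for finitely many shifts `a k` and a
run length `N`, within a bounded distance `C` of any `m` there is an `e` such that `S` contains
the runs of length `N` starting at all the points `m + e + a k`, where `C` depends only on the
number of shifts and on `N`, not on the shifts themselves. Given `(m, n)`, apply this to the
shifts `f i (n + j)` for `j < N`: translating `(m, n)` by `(e, 0)` with `e ≤ C` yields an
`N × N` block inside `{(m, n) | ∀ i, m + f i n ∈ S}`.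
-/

theorem ThicklySyndetic.exists_bounded_common_run {S : Set ℤ} (hS : ThicklySyndetic S)
    {ι : Type*} (s : Finset ι) (N : ℕ) :
    ∃ C : ℕ, ∀ (a : ι → ℤ) (m : ℤ), ∃ e ≤ C, ∀ k ∈ s, ∀ i < N, m + e + a k + i ∈ S := by
  induction s using Finset.cons_induction generalizing N with
  | empty => exact ⟨0, fun _ _ => ⟨0, le_rfl, by simp⟩⟩
  | cons k₀ s _ ih =>
    obtain ⟨g, hg⟩ := hS N
    -- The runs for `s` are taken `g` longer, so that they survive the extra shift `f ≤ g`
    -- which places a run of length `N` at `a k₀`.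
    obtain ⟨C, hC⟩ := ih (N + g)
    refine ⟨C + g, fun a m => ?_⟩
    obtain ⟨e, he, hs⟩ := hC a m
    obtain ⟨f, hf, hk₀⟩ := hg (m + e + a k₀)
    refine ⟨e + f, by omega, fun k hk i hi => ?_⟩
    rcases Finset.mem_cons.1 hk with rfl | hk
    · convert hk₀ i hi using 1
      push_cast
      ring
    · convert hs k hk (f + i) (by omega) using 1
      push_cast
      ring

theorem ThicklySyndetic.thicklySyndetic2_setOf_forall_add_mem {S : Set ℤ}
    (hS : ThicklySyndetic S) {ι : Type*} [Fintype ι] (f : ι → ℤ → ℤ) :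
    ThicklySyndetic2 {mn : ℤ × ℤ | ∀ k, mn.1 + f k mn.2 ∈ S} := by
  intro N
  obtain ⟨C, hC⟩ := hS.exists_bounded_common_run (Finset.univ : Finset (ι × Fin N)) N
  refine ⟨(Finset.range (C + 1)).image fun e : ℕ => ((e : ℤ), (0 : ℤ)), ?_⟩
  rintro ⟨m, n⟩
  obtain ⟨e, he, hrun⟩ := hC (fun kj => f kj.1 (n + kj.2)) m
  refine ⟨(e, 0), Finset.mem_image.2 ⟨e, Finset.mem_range.2 (by omega), rfl⟩, ?_⟩
  intro i j hi hj k
  have hmem := hrun (k, ⟨j, hj⟩) (Finset.mem_univ _) i hi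
  simp only [Prod.mk_add_mk, add_zero]
  convert hmem using 1
  ring

theorem thicklySyndetic_polynomial_general (S : Set ℤ) (hS : ThicklySyndetic S)
    (d : ℕ) (p : Fin d → Polynomial ℤ) :
    ThicklySyndetic2 {mn : ℤ × ℤ | ∀ i : Fin d, mn.1 + (p i).eval mn.2 ∈ S} :=
  hS.thicklySyndetic2_setOf_forall_add_mem fun i n => (p i).eval n

theorem thicklySyndetic_polynomial (S : Set ℤ) (hS : ThicklySyndetic S)
    (d : ℕ) (p : Fin d → Polynomial ℤ) (hp : ∀ i, (p i).eval 0 = 0) :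
    ThicklySyndetic2 {mn : ℤ × ℤ | ∀ i : Fin d, mn.1 + (p i).eval mn.2 ∈ S} :=
  thicklySyndetic_polynomial_general S hS d p
end

section
/- Let (X, ⟨T,S⟩) be a ℤ²-action topological dynamical system on a compact metric space with commuting homeomorphisms T and S. If x is a transitive point for the ℤ²-action and K is the unique minimal subset of X, then for every open neighborhood U of K, the set N(x,U) = {(m,n) ∈ ℤ² : Tᵐ Sⁿ x ∈ U} is thickly syndetic in ℤ². -/
variable {X : Type*} [MetricSpace X] [CompactSpace X]

/-- A set is invariant under the ℤ²-action generated by the homeomorphisms T and S. -/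
def Invariant2 (T S : X ≃ₜ X) (K : Set X) : Prop :=
  (∀ y ∈ K, T y ∈ K) ∧ (∀ y ∈ K, T.symm y ∈ K) ∧
  (∀ y ∈ K, S y ∈ K) ∧ (∀ y ∈ K, S.symm y ∈ K)

/-- A minimal subset for the ℤ²-action generated by T and S. -/
def IsMinimal2 (T S : X ≃ₜ X) (K : Set X) : Prop :=
  K.Nonempty ∧ IsClosed K ∧ Invariant2 T S K ∧
    ∀ K' ⊆ K, K'.Nonempty → IsClosed K' → Invariant2 T S K' → K' = K

/-! The unique minimal set `K` lies in every nonempty closed invariant set, since by Zorn's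
lemma and compactness each such set contains a minimal one. In particular `K` lies in every
orbit closure, so every orbit enters the open neighbourhood `V` of `K` consisting of the points
`y` with `Tⁱ Sʲ y ∈ U` for all `i, j < N`. By compactness finitely many times `F` serve all
points at once; along the orbit of `x` this means that every `v ∈ ℤ²` has some `e ∈ F` such that
the `N × N` block at `v + e` lies in `N(x, U)`. -/

open Set

theorem IsClosed.exists_minimal_subset {Y : Type*} [TopologicalSpace Y] [CompactSpace Y]
    {P : Set Y → Prop} (hP : ∀ c : Set (Set Y), (∀ A ∈ c, P A) → P (⋂₀ c))
    {s : Set Y} (hs : IsClosed s) (hne : s.Nonempty) (hPs : P s) :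
    ∃ m ⊆ s, Minimal (fun A => A.Nonempty ∧ IsClosed A ∧ P A) m := by
  refine zorn_superset_nonempty _ (fun c hcS hchain hcne => ?_) s ⟨hne, hs, hPs⟩
  have : Nonempty c := hcne.to_subtype
  refine ⟨⋂₀ c, ⟨?_, isClosed_sInter fun A hA => (hcS hA).2.1, hP c fun A hA => (hcS hA).2.2⟩,
    fun A hA => sInter_subset_of_mem hA⟩
  exact IsCompact.nonempty_sInter_of_directed_nonempty_isCompact_isClosed
    (hchain.symm.directedOn (r := fun A B : Set Y => A ⊇ B)) (fun A hA => (hcS hA).1)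
    (fun A hA => (hcS hA).2.1.isCompact) fun A hA => (hcS hA).2.1

theorem exists_finset_forall_exists_mem_of_isOpen {Y ι : Type*} [TopologicalSpace Y]
    [CompactSpace Y] {f : ι → Y → Y} (hf : ∀ i, Continuous (f i)) {V : Set Y} (hV : IsOpen V)
    (h : ∀ y, ∃ i, f i y ∈ V) : ∃ F : Finset ι, ∀ y, ∃ i ∈ F, f i y ∈ V := by
  obtain ⟨F, hF⟩ := isCompact_univ.elim_finite_subcover (fun i => f i ⁻¹' V)
    (fun i => hV.preimage (hf i)) fun y _ => mem_iUnion.2 (h y)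
  exact ⟨F, fun y => by simpa using hF (mem_univ y)⟩

namespace Homeomorph

variable {Y : Type*} [TopologicalSpace Y]

theorem toEquiv_zpow (T : Y ≃ₜ Y) (m : ℤ) : (T ^ m).toEquiv = T.toEquiv ^ m :=
  map_zpow (MonoidHom.mk' (fun f : Y ≃ₜ Y => f.toEquiv) fun _ _ => rfl) T m

theorem mapsTo_zpow {T : Y ≃ₜ Y} {A : Set Y} (h : MapsTo T A A) (h' : MapsTo T.symm A A)
    (m : ℤ) : MapsTo ⇑(T ^ m) A A := by
  induction m using Int.induction_on with
  | zero => exact mapsTo_id A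
  | succ m ih => rw [zpow_add_one]; exact ih.comp h
  | pred m ih => rw [zpow_sub_one]; exact ih.comp h'

def zpowPair (T S : Y ≃ₜ Y) (v : ℤ × ℤ) : Y ≃ₜ Y := T ^ v.1 * S ^ v.2

theorem zpowPair_apply (T S : Y ≃ₜ Y) (v : ℤ × ℤ) (y : Y) :
    zpowPair T S v y = (T.toEquiv ^ v.1) ((S.toEquiv ^ v.2) y) := by
  rw [← toEquiv_zpow, ← toEquiv_zpow]; rfl

theorem zpowPair_add {T S : Y ≃ₜ Y} (h : Commute T S) (v w : ℤ × ℤ) :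
    zpowPair T S (v + w) = zpowPair T S v * zpowPair T S w := by
  simp only [zpowPair, Prod.fst_add, Prod.snd_add, zpow_add, mul_assoc,
    (h.zpow_zpow w.1 v.2).left_comm]

end Homeomorph

open Homeomorph

section

variable {Y : Type*} [MetricSpace Y] {T S : Y ≃ₜ Y}

theorem invariant2_iff_forall_mapsTo {A : Set Y} :
    Invariant2 T S A ↔ ∀ v, MapsTo (zpowPair T S v) A A := by
  refine ⟨fun ⟨hT, hT', hS, hS'⟩ v => (mapsTo_zpow hT hT' v.1).comp (mapsTo_zpow hS hS' v.2),
    fun h => ⟨?_, ?_, ?_, ?_⟩⟩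
  · simpa [zpowPair, MapsTo] using h (1, 0)
  · simpa [zpowPair, MapsTo] using h (-1, 0)
  · simpa [zpowPair, MapsTo] using h (0, 1)
  · simpa [zpowPair, MapsTo] using h (0, -1)

theorem invariant2_sInter {c : Set (Set Y)} (h : ∀ A ∈ c, Invariant2 T S A) :
    Invariant2 T S (⋂₀ c) :=
  invariant2_iff_forall_mapsTo.2 fun v _ hy =>
    mem_sInter.2 fun A hA => invariant2_iff_forall_mapsTo.1 (h A hA) v (hy A hA)

theorem invariant2_closure_range_zpowPair (h : Commute T S) (y : Y) :
    Invariant2 T S (closure (range fun v => zpowPair T S v y)) := by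
  refine invariant2_iff_forall_mapsTo.2 fun v => MapsTo.closure ?_ (zpowPair T S v).continuous
  rintro _ ⟨w, rfl⟩
  exact ⟨v + w, by simp only [zpowPair_add h, Homeomorph.mul_apply]⟩

theorem subset_of_forall_isMinimal2_eq [CompactSpace Y] {K : Set Y}
    (huniq : ∀ K' : Set Y, IsMinimal2 T S K' → K' = K) {A : Set Y} (hne : A.Nonempty)
    (hcl : IsClosed A) (hinv : Invariant2 T S A) : K ⊆ A := by
  obtain ⟨m, hmA, hm⟩ := hcl.exists_minimal_subset (fun _ => invariant2_sInter) hne hinv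
  have hmin : IsMinimal2 T S m :=
    ⟨hm.prop.1, hm.prop.2.1, hm.prop.2.2, fun _ hK' hne hcl hinv =>
      hm.eq_of_subset ⟨hne, hcl, hinv⟩ hK'⟩
  exact huniq m hmin ▸ hmA

theorem syndetic2_setOf_zpowPair_mem [CompactSpace Y] (h : Commute T S) {K : Set Y}
    (hK : K.Nonempty) (huniq : ∀ K' : Set Y, IsMinimal2 T S K' → K' = K) {V : Set Y} (hV : IsOpen V)
    (hKV : K ⊆ V) (x : Y) : Syndetic2 {v | zpowPair T S v x ∈ V} := by
  have hvisit (y : Y) : ∃ v, zpowPair T S v y ∈ V := by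
    obtain ⟨k, hk⟩ := hK
    have hky : k ∈ closure (range fun v => zpowPair T S v y) :=
      subset_of_forall_isMinimal2_eq huniq (range_nonempty _).closure isClosed_closure
        (invariant2_closure_range_zpowPair h y) hk
    obtain ⟨_, hzV, v, rfl⟩ := mem_closure_iff.1 hky V hV (hKV hk)
    exact ⟨v, hzV⟩
  obtain ⟨F, hF⟩ := exists_finset_forall_exists_mem_of_isOpen
    (fun v => (zpowPair T S v).continuous) hV hvisit
  refine ⟨F, fun v => ?_⟩
  obtain ⟨e, he, hmem⟩ := hF (zpowPair T S v x)
  refine ⟨e, he, ?_⟩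
  show zpowPair T S (v + e) x ∈ V
  rwa [add_comm, zpowPair_add h]

end

theorem thicklySyndetic_of_unique_minimal_general (T S : X ≃ₜ X)
    (hcomm : ∀ y : X, T (S y) = S (T y)) (x : X)
    (K : Set X) (hK : IsMinimal2 T S K) (huniq : ∀ K' : Set X, IsMinimal2 T S K' → K' = K)
    (U : Set X) (hU : IsOpen U) (hKU : K ⊆ U) :
    ThicklySyndetic2 {mn : ℤ × ℤ | (T.toEquiv ^ mn.1) ((S.toEquiv ^ mn.2) x) ∈ U} := by
  have h : Commute T S := Homeomorph.ext hcomm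
  intro N
  set V := ⋂ i ∈ Finset.range N, ⋂ j ∈ Finset.range N, zpowPair T S (i, j) ⁻¹' U
  have hV : IsOpen V := isOpen_biInter_finset fun i _ =>
    isOpen_biInter_finset fun j _ => hU.preimage (zpowPair T S _).continuous
  have hKV : K ⊆ V := fun k hk => mem_iInter₂.2 fun i _ => mem_iInter₂.2 fun j _ =>
    hKU (invariant2_iff_forall_mapsTo.1 hK.2.2.1 _ hk)
  obtain ⟨F, hF⟩ := syndetic2_setOf_zpowPair_mem h hK.1 huniq hV hKV x
  refine ⟨F, fun v => ?_⟩
  obtain ⟨e, he, hmem⟩ := hF v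
  refine ⟨e, he, fun i j hi hj => ?_⟩
  have hblock := mem_iInter₂.1 (mem_iInter₂.1 hmem i (Finset.mem_range.2 hi)) j
    (Finset.mem_range.2 hj)
  rw [mem_preimage, ← Homeomorph.mul_apply, ← zpowPair_add h, zpowPair_apply] at hblock
  simpa [add_comm] using hblock

/-- If x is a transitive point of the ℤ²-system generated by commuting homeomorphisms
T and S, and K is the unique minimal subset, then for every open neighborhood U of K,
the set of (m,n) with TᵐSⁿx ∈ U is thickly syndetic in ℤ². -/
theorem thicklySyndetic_of_unique_minimal (T S : X ≃ₜ X)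
    (hcomm : ∀ y : X, T (S y) = S (T y)) (x : X)
    (hx : Dense {y : X | ∃ m n : ℤ, y = (T.toEquiv ^ m) ((S.toEquiv ^ n) x)})
    (K : Set X) (hK : IsMinimal2 T S K) (huniq : ∀ K' : Set X, IsMinimal2 T S K' → K' = K)
    (U : Set X) (hU : IsOpen U) (hKU : K ⊆ U) :
    ThicklySyndetic2 {mn : ℤ × ℤ | (T.toEquiv ^ mn.1) ((S.toEquiv ^ mn.2) x) ∈ U} :=
  thicklySyndetic_of_unique_minimal_general T S hcomm x K hK huniq U hU hKU
end

section
/- Let (X, ⟨T,S⟩) be a minimal ℤ²-action topological dynamical system on a compact metric space, where T and S are commuting homeomorphisms of X. Then the set of points that are minimal for the ℤ-action generated by T alone is dense in X. -/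
/-!
Minimal sets of `T` exist by Zorn's lemma and compactness, so `T` has a minimal point. A
homeomorphism `R` commuting with `T` maps `T`-orbits to `T`-orbits and hence `T`-minimal sets to
`T`-minimal sets, so the set of `T`-minimal points is invariant under `T^{±1}` and `S^{±1}`. Its
closure is therefore a nonempty closed `⟨T, S⟩`-invariant set, which is all of `X` by minimality.
-/

variable {X : Type*} [MetricSpace X] [CompactSpace X]

/-- A set is invariant under the ℤ-action generated by the homeomorphism T. -/
def InvariantT (T : X ≃ₜ X) (K : Set X) : Prop :=
  (∀ y ∈ K, T y ∈ K) ∧ (∀ y ∈ K, T.symm y ∈ K)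

/-- A minimal subset for the ℤ-action generated by T. -/
def IsMinimalT (T : X ≃ₜ X) (K : Set X) : Prop :=
  K.Nonempty ∧ IsClosed K ∧ InvariantT T K ∧
    ∀ K' ⊆ K, K'.Nonempty → IsClosed K' → InvariantT T K' → K' = K

/-- x is a minimal point for T if the T-orbit closure of x is a minimal subsystem. -/
def IsMinimalPointT (T : X ≃ₜ X) (x : X) : Prop :=
  IsMinimalT T (closure {y : X | ∃ n : ℤ, y = (T.toEquiv ^ n) x})

def zOrbit (T : X ≃ₜ X) (x : X) : Set X := {y : X | ∃ n : ℤ, y = (T.toEquiv ^ n) x}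

section

omit [CompactSpace X]

variable {T R : X ≃ₜ X} {K : Set X} {x : X}

theorem isMinimalPointT_iff : IsMinimalPointT T x ↔ IsMinimalT T (closure (zOrbit T x)) :=
  Iff.rfl

theorem mem_zOrbit_self : x ∈ zOrbit T x := ⟨0, rfl⟩

theorem commute_symm_right (h : Function.Commute T R) : Function.Commute T R.symm :=
  Function.Commute.symm (h.symm.inverse_left R.left_inv R.right_inv)

theorem commute_toEquiv (h : Function.Commute T R) : Commute T.toEquiv R.toEquiv :=
  Equiv.ext h

theorem InvariantT.zpow_mem (hK : InvariantT T K) (n : ℤ) {y : X} (hy : y ∈ K) :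
    (T.toEquiv ^ n) y ∈ K := by
  induction n using Int.induction_on generalizing y with
  | zero => exact hy
  | succ k ih =>
    rw [add_comm, zpow_add, zpow_one, Equiv.Perm.mul_apply]
    exact hK.1 _ (ih hy)
  | pred k ih =>
    rw [sub_eq_neg_add, zpow_add, zpow_neg_one, Equiv.Perm.mul_apply]
    exact hK.2 _ (ih hy)

theorem invariantT_closure_zOrbit (T : X ≃ₜ X) (x : X) : InvariantT T (closure (zOrbit T x)) := by
  constructor
  · refine fun y hy => Set.MapsTo.closure (fun z hz => ?_) T.continuous hy
    obtain ⟨n, rfl⟩ := hz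
    exact ⟨1 + n, by rw [zpow_add, zpow_one, Equiv.Perm.mul_apply]; rfl⟩
  · refine fun y hy => Set.MapsTo.closure (fun z hz => ?_) T.symm.continuous hy
    obtain ⟨n, rfl⟩ := hz
    exact ⟨-1 + n, by rw [zpow_add, zpow_neg_one, Equiv.Perm.mul_apply]; rfl⟩

theorem IsMinimalT.isMinimalPointT_of_mem (hK : IsMinimalT T K) (hx : x ∈ K) :
    IsMinimalPointT T x := by
  have horbit : closure (zOrbit T x) ⊆ K :=
    closure_minimal (fun _ ⟨n, hn⟩ => hn ▸ hK.2.2.1.zpow_mem n hx) hK.2.1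
  have heq : closure (zOrbit T x) = K := hK.2.2.2 _ horbit ⟨x, subset_closure mem_zOrbit_self⟩
    isClosed_closure (invariantT_closure_zOrbit T x)
  rw [isMinimalPointT_iff, heq]
  exact hK

theorem InvariantT.image (h : Function.Commute T R) (hK : InvariantT T K) :
    InvariantT T (R '' K) := by
  have hsymm : Function.Commute T.symm R := h.inverse_left T.left_inv T.right_inv
  constructor
  · rintro _ ⟨y, hy, rfl⟩
    exact ⟨T y, hK.1 y hy, (h y).symm⟩
  · rintro _ ⟨y, hy, rfl⟩
    exact ⟨T.symm y, hK.2 y hy, (hsymm y).symm⟩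

theorem IsMinimalT.image (h : Function.Commute T R) (hK : IsMinimalT T K) :
    IsMinimalT T (R '' K) := by
  refine ⟨hK.1.image R, R.isClosed_image.2 hK.2.1, hK.2.2.1.image h, ?_⟩
  intro K' hK' hne hclosed hinv
  have hpull : R.symm '' K' = K := by
    refine hK.2.2.2 _ ?_ (hne.image R.symm) (R.symm.isClosed_image.2 hclosed)
      (hinv.image (commute_symm_right h))
    rintro _ ⟨y, hy, rfl⟩
    obtain ⟨z, hz, rfl⟩ := hK' hy
    simpa using hz
  rw [← hpull]
  exact (R.toEquiv.image_symm_image K').symm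

theorem zOrbit_apply (h : Function.Commute T R) (x : X) : zOrbit T (R x) = R '' zOrbit T x := by
  have hzpow (n : ℤ) : (T.toEquiv ^ n) (R x) = R ((T.toEquiv ^ n) x) :=
    Equiv.ext_iff.1 ((commute_toEquiv h).zpow_left n).eq x
  ext y
  constructor
  · rintro ⟨n, rfl⟩
    exact ⟨_, ⟨n, rfl⟩, (hzpow n).symm⟩
  · rintro ⟨_, ⟨n, rfl⟩, rfl⟩
    exact ⟨n, (hzpow n).symm⟩

theorem IsMinimalPointT.apply (h : Function.Commute T R) (hx : IsMinimalPointT T x) :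
    IsMinimalPointT T (R x) := by
  rw [isMinimalPointT_iff, zOrbit_apply h, ← R.image_closure]
  exact hx.image h

end

theorem exists_isMinimalT [Nonempty X] (T : X ≃ₜ X) : ∃ K : Set X, IsMinimalT T K := by
  let closedInvariant : Set (Set X) := {K | K.Nonempty ∧ IsClosed K ∧ InvariantT T K}
  have hchain : ∀ c ⊆ closedInvariant, IsChain (· ⊆ ·) c → c.Nonempty →
      ∃ lb ∈ closedInvariant, ∀ s ∈ c, lb ⊆ s := by
    intro c hc hc_chain hc_ne
    have : Nonempty c := hc_ne.to_subtype
    refine ⟨⋂₀ c, ⟨?_, isClosed_sInter fun s hs => (hc hs).2.1, ?_, ?_⟩,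
      fun s hs => Set.sInter_subset_of_mem hs⟩
    · exact IsCompact.nonempty_sInter_of_directed_nonempty_isCompact_isClosed
        (IsChain.directedOn hc_chain.symm) (fun s hs => (hc hs).1)
        (fun s hs => (hc hs).2.1.isCompact) (fun s hs => (hc hs).2.1)
    · exact fun y hy s hs => (hc hs).2.2.1 y (hy s hs)
    · exact fun y hy s hs => (hc hs).2.2.2 y (hy s hs)
  obtain ⟨K, -, hK⟩ := zorn_superset_nonempty closedInvariant hchain Set.univ
    ⟨Set.univ_nonempty, isClosed_univ, fun _ _ => trivial, fun _ _ => trivial⟩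
  exact ⟨K, hK.1.1, hK.1.2.1, hK.1.2.2,
    fun K' hK' hne hclosed hinv => subset_antisymm hK' (hK.2 ⟨hne, hclosed, hinv⟩ hK')⟩

theorem exists_isMinimalPointT [Nonempty X] (T : X ≃ₜ X) : ∃ x : X, IsMinimalPointT T x := by
  obtain ⟨K, hK⟩ := exists_isMinimalT T
  exact ⟨hK.1.some, hK.isMinimalPointT_of_mem hK.1.some_mem⟩

/-- In a minimal ℤ²-system generated by commuting homeomorphisms T and S, the set of
points minimal for the ℤ-action of T alone is dense. -/
theorem dense_minimal_points_of_commuting (T S : X ≃ₜ X)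
    (hcomm : ∀ y : X, T (S y) = S (T y))
    (hmin : IsMinimal2 T S (Set.univ : Set X)) :
    Dense {x : X | IsMinimalPointT T x} := by
  have : Nonempty X := hmin.1.to_subtype.map Subtype.val
  let D := {x : X | IsMinimalPointT T x}
  have hD_ne : D.Nonempty := exists_isMinimalPointT T
  have hD_closure {R : X ≃ₜ X} (h : Function.Commute T R) : Set.MapsTo R (closure D) (closure D) :=
    Set.MapsTo.closure (fun _ (hx : IsMinimalPointT T _) => hx.apply h) R.continuous
  have hcommS : Function.Commute T S := hcomm
  have hD_invariant : Invariant2 T S (closure D) :=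
    ⟨hD_closure (.refl T), hD_closure (commute_symm_right (.refl T)), hD_closure hcommS,
      hD_closure (commute_symm_right hcommS)⟩
  exact dense_iff_closure_eq.2 <|
    hmin.2.2.2 _ (Set.subset_univ _) hD_ne.closure isClosed_closure hD_invariant
end

section
/- Let S ⊆ ℤ be thickly syndetic, let x = 1_{ℤ∖S} ∈ {0,1}^ℤ (x(n)=0 iff n ∈ S), and let X_S be the orbit closure of x under the left shift T. Then the all-zero sequence 𝟎 is the unique minimal point of (X_S, T). -/
/-- The left shift on two-sided binary sequences. -/
def shiftZ (y : ℤ → Bool) : ℤ → Bool := fun n => y (n + 1)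

/-- The inverse (right) shift. -/
def shiftZInv (y : ℤ → Bool) : ℤ → Bool := fun n => y (n - 1)

/-- The two-sided orbit of a point under the shift. -/
def orbitZ (x : ℤ → Bool) : Set (ℤ → Bool) :=
  {y | ∃ k : ℤ, y = fun n => x (n + k)}

/-- A set is shift-invariant. -/
def ShiftInvariant (K : Set (ℤ → Bool)) : Prop :=
  (∀ y ∈ K, shiftZ y ∈ K) ∧ (∀ y ∈ K, shiftZInv y ∈ K)

/-- A minimal subset of the full shift. -/
def IsMinimalSubshift (K : Set (ℤ → Bool)) : Prop :=
  K.Nonempty ∧ IsClosed K ∧ ShiftInvariant K ∧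
    ∀ K' ⊆ K, K'.Nonempty → IsClosed K' → ShiftInvariant K' → K' = K

/-- z is a minimal point if its orbit closure is a minimal system. -/
def IsMinimalPointShift (z : ℤ → Bool) : Prop :=
  IsMinimalSubshift (closure (orbitZ z))

/-!
Every point of `X_S` has arbitrarily long runs of zeros, because `S` contains runs of every
length at bounded gaps and a finite window of a point of `X_S` is a window of `x`. Shifting a
long zero run onto a given finite window shows that `𝟎` lies in the orbit closure of every
point of `X_S`. Since `{𝟎}` is a closed invariant set, a minimal point of `X_S` must be `𝟎`,
and `𝟎` itself is a minimal point of `X_S`.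
-/

theorem mem_closure_iff_forall_finset {ι α : Type*} [TopologicalSpace α] [DiscreteTopology α]
    {A : Set (ι → α)} {z : ι → α} :
    z ∈ closure A ↔ ∀ F : Finset ι, ∃ y ∈ A, ∀ n ∈ F, y n = z n := by
  constructor
  · intro hz F
    have hopen : IsOpen ((F : Set ι).pi fun n => {z n}) :=
      isOpen_set_pi F.finite_toSet fun _ _ => isOpen_discrete _
    obtain ⟨y, hyF, hyA⟩ := mem_closure_iff.mp hz _ hopen (by simp)
    exact ⟨y, hyA, fun n hn => hyF n hn⟩
  · intro h
    rw [mem_closure_iff_nhds]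
    intro U hU
    rw [nhds_pi, Filter.mem_pi] at hU
    obtain ⟨I, hI, t, ht, hsub⟩ := hU
    obtain ⟨y, hyA, hy⟩ := h hI.toFinset
    refine ⟨y, hsub fun n hn => ?_, hyA⟩
    rw [hy n (hI.mem_toFinset.mpr hn)]
    exact mem_of_mem_nhds (ht n)

theorem mem_closure_orbitZ_self (z : ℤ → Bool) : z ∈ closure (orbitZ z) :=
  subset_closure ⟨0, by simp⟩

theorem orbitZ_const (b : Bool) : orbitZ (fun _ => b) = {fun _ => b} := by
  ext y
  constructor
  · rintro ⟨k, rfl⟩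
    rfl
  · rintro rfl
    exact ⟨0, rfl⟩

theorem shiftInvariant_singleton_const (b : Bool) : ShiftInvariant {fun _ => b} :=
  ⟨by rintro _ rfl; rfl, by rintro _ rfl; rfl⟩

theorem isMinimalPointShift_const (b : Bool) : IsMinimalPointShift fun _ => b := by
  rw [IsMinimalPointShift, orbitZ_const, closure_singleton]
  refine ⟨Set.singleton_nonempty _, isClosed_singleton, shiftInvariant_singleton_const b, ?_⟩
  intro K' hK' hne _ _
  exact (Set.subset_singleton_iff_eq.mp hK').resolve_left hne.ne_empty

theorem IsMinimalPointShift.eq_const_of_const_mem_closure {z : ℤ → Bool} {b : Bool}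
    (hz : IsMinimalPointShift z) (hb : (fun _ => b) ∈ closure (orbitZ z)) :
    z = fun _ => b := by
  have hclosure : {fun _ => b} = closure (orbitZ z) :=
    hz.2.2.2 _ (Set.singleton_subset_iff.mpr hb) (Set.singleton_nonempty _) isClosed_singleton
      (shiftInvariant_singleton_const b)
  simpa [← hclosure] using mem_closure_orbitZ_self z

theorem const_false_mem_closure_orbitZ {z : ℤ → Bool}
    (hz : ∀ N : ℕ, ∃ m : ℤ, ∀ i : ℕ, i < N → z (m + i) = false) :
    (fun _ => false) ∈ closure (orbitZ z) := by
  refine mem_closure_iff_forall_finset.mpr fun F => ?_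
  -- a zero run of length `2M + 1` centred at the origin covers `F ⊆ [-M, M]`
  let M : ℕ := F.sup Int.natAbs
  obtain ⟨m, hm⟩ := hz (2 * M + 1)
  refine ⟨fun n => z (n + (m + M)), ⟨m + M, rfl⟩, fun n hn => ?_⟩
  have hnM : n.natAbs ≤ M := Finset.le_sup (f := Int.natAbs) hn
  have hrun := hm (n + M).toNat (by omega)
  rwa [show m + ((n + M).toNat : ℤ) = n + (m + M) by omega] at hrun

theorem exists_false_run_of_mem_closure_orbitZ {S : Set ℤ} (hS : ThicklySyndetic S)
    {x z : ℤ → Bool} (hx : ∀ n ∈ S, x n = false) (hz : z ∈ closure (orbitZ x)) (N : ℕ) :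
    ∃ m : ℤ, ∀ i : ℕ, i < N → z (m + i) = false := by
  obtain ⟨g, hg⟩ := hS N
  obtain ⟨y, ⟨k, rfl⟩, hy⟩ :=
    mem_closure_iff_forall_finset.mp hz (Finset.Icc 0 (g + N : ℤ))
  obtain ⟨i, hig, hrun⟩ := hg k
  refine ⟨i, fun j hj => ?_⟩
  rw [← hy _ (by simp only [Finset.mem_Icc]; omega)]
  convert hx _ (hrun j hj) using 2
  ring

/-- If S is thickly syndetic and x = 1_{ℤ∖S}, then the all-zero sequence is the
unique minimal point of the orbit closure X_S of x. -/
theorem unique_minimal_point_of_thicklySyndetic (S : Set ℤ) (hS : ThicklySyndetic S)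
    (x : ℤ → Bool) (hx : ∀ n : ℤ, x n = false ↔ n ∈ S) :
    {z : ℤ → Bool | z ∈ closure (orbitZ x) ∧ IsMinimalPointShift z} =
      {fun _ => false} := by
  have hzero : ∀ z ∈ closure (orbitZ x), (fun _ => false) ∈ closure (orbitZ z) := fun z hz =>
    const_false_mem_closure_orbitZ
      (exists_false_run_of_mem_closure_orbitZ hS (fun n hn => (hx n).mpr hn) hz)
  ext z
  constructor
  · rintro ⟨hzX, hmin⟩
    exact hmin.eq_const_of_const_mem_closure (hzero z hzX)
  · rintro rfl
    exact ⟨hzero x (mem_closure_orbitZ_self x), isMinimalPointShift_const false⟩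
end

section
/- Define words A_1 = "1" and A_{n+1} = A_n 0^{b_n} A_n 0^{n} A_n, where b_n > 15·|A_n| and 0^{k} denotes k zeros. Let x = lim_{n→∞} A_n^∞ be the one-sided sequence obtained as the limit (each A_{n+1} begins with A_n), and let X be the orbit closure of x under the one-sided shift T. Then (X,T) is strongly mixing: for all nonempty open U,V ⊆ X, the set N(U,V) = {n : U ∩ T^{-n}V ≠ ∅} is cofinite in ℕ. -/
/-!
A point of the orbit closure is approximated on any finite window by a shift of `x`, so mixing
reduces to a property of `x` alone: for every `p`, the prefix of length `p` occurs twice in `x`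
at every sufficiently large distance `g`. For the construction this comes from the block
`A m 0^K A m` inside `A (K + 1)`, available for every `K ≥ m`: the two copies of `A m` sit at
distance `|A m| + K`, which takes every large value.
-/

/-- The one-sided shift on binary sequences. -/
def shiftN (y : ℕ → Bool) : ℕ → Bool := fun n => y (n + 1)

/-- The forward orbit of a point under the one-sided shift. -/
def orbitN (x : ℕ → Bool) : Set (ℕ → Bool) :=
  {y | ∃ k : ℕ, y = fun n => x (n + k)}

open PiNat

lemma shiftN_iterate_apply (y : ℕ → Bool) (n s : ℕ) : shiftN^[n] y s = y (s + n) := by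
  induction n generalizing y with
  | zero => rfl
  | succ n ih =>
    rw [Function.iterate_succ_apply, ih]
    exact congrArg y (by omega)

lemma exists_cylinder_subset_of_isOpen {E : ℕ → Type*} [∀ n, TopologicalSpace (E n)]
    [∀ n, DiscreteTopology (E n)] {U : Set (∀ n, E n)} (hU : IsOpen U) {u : ∀ n, E n}
    (hu : u ∈ U) : ∃ r, cylinder u r ⊆ U := by
  obtain ⟨-, ⟨y, r, rfl⟩, huy, hsub⟩ :=
    (isTopologicalBasis_cylinders E).exists_subset_of_mem_open hu hU
  exact ⟨r, mem_cylinder_iff_eq.1 huy ▸ hsub⟩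

lemma exists_shift_mem_cylinder_of_mem_closure_orbitN {x u : ℕ → Bool}
    (hu : u ∈ closure (orbitN x)) (r : ℕ) : ∃ k, ∀ s < r, x (s + k) = u s := by
  obtain ⟨-, hy, k, rfl⟩ :=
    mem_closure_iff.1 hu _ (isOpen_cylinder _ u r) (self_mem_cylinder u r)
  exact ⟨k, hy⟩

def RepeatsPrefixesAtLargeGaps (x : ℕ → Bool) : Prop :=
  ∀ p, ∃ N, ∀ g ≥ N, ∃ t, ∀ d < p, x (t + d) = x d ∧ x (t + g + d) = x d

theorem mixing_of_repeatsPrefixesAtLargeGaps {x : ℕ → Bool} (hx : RepeatsPrefixesAtLargeGaps x)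
    {U V : Set (ℕ → Bool)} (hU : IsOpen U) (hV : IsOpen V)
    (hUx : (closure (orbitN x) ∩ U).Nonempty) (hVx : (closure (orbitN x) ∩ V).Nonempty) :
    ∃ N, ∀ n ≥ N, ∃ z ∈ closure (orbitN x), z ∈ U ∧ shiftN^[n] z ∈ V := by
  obtain ⟨u, huX, huU⟩ := hUx
  obtain ⟨v, hvX, hvV⟩ := hVx
  obtain ⟨r, hrU⟩ := exists_cylinder_subset_of_isOpen hU huU
  obtain ⟨r', hr'V⟩ := exists_cylinder_subset_of_isOpen hV hvV
  obtain ⟨k, hk⟩ := exists_shift_mem_cylinder_of_mem_closure_orbitN huX r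
  obtain ⟨k', hk'⟩ := exists_shift_mem_cylinder_of_mem_closure_orbitN hvX r'
  obtain ⟨N, hN⟩ := hx (max (k + r) (k' + r'))
  refine ⟨N + k', fun n hn => ?_⟩
  -- the two copies of the prefix, at distance `n + k - k'`, carry the windows of `u` and `v`
  obtain ⟨t, ht⟩ := hN (n + k - k') (by omega)
  refine ⟨fun s => x (s + (t + k)), subset_closure ⟨t + k, rfl⟩,
    hrU fun s hs => ?_, hr'V fun s hs => ?_⟩
  · rw [← hk s hs, ← (ht (s + k) (by omega)).1]
    exact congrArg x (by omega)
  · rw [shiftN_iterate_apply, ← hk' s hs, ← (ht (s + k') (by omega)).2]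
    exact congrArg x (by omega)

lemma exists_eq_getD_of_isInfix {α : Type*} {x : ℕ → α} {a : α} {W P : List α}
    (hP : ∀ k < P.length, x k = P.getD k a) (h : W <:+: P) :
    ∃ t, ∀ d < W.length, x (t + d) = W.getD d a := by
  obtain ⟨s, u, rfl⟩ := h
  refine ⟨s.length, fun d hd => ?_⟩
  rw [hP _ (by simp only [List.length_append]; omega), List.append_assoc,
    List.getD_append_right _ _ _ _ (by omega), Nat.add_sub_cancel_left,
    List.getD_append _ _ _ _ hd]

section Construction

variable {A : ℕ → List Bool} {b : ℕ → ℕ}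
  (hArec : ∀ n : ℕ, 1 ≤ n →
    A (n + 1) = A n ++ List.replicate (b n) false ++ A n ++ List.replicate n false ++ A n)
include hArec

lemma isPrefix_of_le {m M : ℕ} (hm : 1 ≤ m) (hmM : m ≤ M) : A m <+: A M := by
  induction M, hmM using Nat.le_induction with
  | base => exact List.prefix_rfl
  | succ M hM ih =>
    rw [hArec M (hm.trans hM)]
    simp only [List.append_assoc]
    exact ih.trans (List.prefix_append _ _)

lemma isSuffix_of_le {m M : ℕ} (hm : 1 ≤ m) (hmM : m ≤ M) : A m <:+ A M := by
  induction M, hmM using Nat.le_induction with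
  | base => exact List.suffix_rfl
  | succ M hM ih =>
    rw [hArec M (hm.trans hM)]
    exact ih.trans (List.suffix_append _ _)

lemma le_length (hA1 : A 1 = [true]) {n : ℕ} (hn : 1 ≤ n) : n ≤ (A n).length := by
  induction n, hn using Nat.le_induction with
  | base => simp [hA1]
  | succ n hn ih =>
    rw [hArec n hn]
    simp only [List.length_append, List.length_replicate]
    omega

lemma isInfix_append_replicate_append {m K : ℕ} (hm : 1 ≤ m) (hmK : m ≤ K) :
    A m ++ List.replicate K false ++ A m <:+: A (K + 1) := by
  obtain ⟨P, hP⟩ := isSuffix_of_le hArec hm hmK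
  obtain ⟨Q, hQ⟩ := isPrefix_of_le hArec hm hmK
  refine ⟨A K ++ List.replicate (b K) false ++ P, Q, ?_⟩
  calc _ = A K ++ List.replicate (b K) false ++ (P ++ A m) ++ List.replicate K false
        ++ (A m ++ Q) := by simp only [List.append_assoc]
    _ = A (K + 1) := by rw [hP, hQ, hArec K (hm.trans hmK)]

theorem repeatsPrefixesAtLargeGaps_of_construction (hA1 : A 1 = [true]) {x : ℕ → Bool}
    (hx : ∀ n : ℕ, 1 ≤ n → ∀ k : ℕ, k < (A n).length → x k = (A n).getD k false) :
    RepeatsPrefixesAtLargeGaps x := by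
  intro p
  set m := max p 1
  have hm : 1 ≤ m := le_max_right p 1
  set L := (A m).length
  have hpL : p ≤ L := (le_max_left p 1).trans (le_length hArec hA1 hm)
  refine ⟨L + m, fun g hg => ?_⟩
  obtain ⟨t, ht⟩ := exists_eq_getD_of_isInfix (hx (g - L + 1) (by omega))
    (isInfix_append_replicate_append hArec hm (K := g - L) (by omega))
  have hlen : (A m ++ List.replicate (g - L) false).length = g := by
    simp only [List.length_append, List.length_replicate]; omega
  refine ⟨t, fun d hd => ⟨?_, ?_⟩⟩
  · rw [ht d (by simp only [List.length_append]; omega), List.getD_append _ _ _ _ (by omega),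
      List.getD_append _ _ _ _ (by omega), hx m hm d (by omega)]
  · rw [add_assoc, ht (g + d) (by simp only [List.length_append] at hlen ⊢; omega),
      List.getD_append_right _ _ _ _ (by omega), hlen, Nat.add_sub_cancel_left,
      hx m hm d (by omega)]

end Construction

theorem strong_mixing_of_construction_general (A : ℕ → List Bool) (b : ℕ → ℕ)
    (hA1 : A 1 = [true])
    (hArec : ∀ n : ℕ, 1 ≤ n →
      A (n + 1) = A n ++ List.replicate (b n) false ++ A n ++ List.replicate n false ++ A n)
    (x : ℕ → Bool)
    (hx : ∀ n : ℕ, 1 ≤ n → ∀ k : ℕ, k < (A n).length → x k = (A n).getD k false) :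
    ∀ U V : Set (ℕ → Bool), IsOpen U → IsOpen V →
      (closure (orbitN x) ∩ U).Nonempty → (closure (orbitN x) ∩ V).Nonempty →
      ∃ N : ℕ, ∀ n : ℕ, N ≤ n →
        ∃ z ∈ closure (orbitN x), z ∈ U ∧ shiftN^[n] z ∈ V :=
  fun _ _ hU hV hUx hVx =>
    mixing_of_repeatsPrefixesAtLargeGaps
      (repeatsPrefixesAtLargeGaps_of_construction hArec hA1 hx) hU hV hUx hVx

/-- For the word construction A₁ = 1, A_{n+1} = A_n 0^{b_n} A_n 0^{n} A_n with
b_n > 15|A_n| and x = lim A_n^∞, the orbit closure (X,T) is strongly mixing: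
for all nonempty (relatively) open U,V the hitting set N(U,V) is cofinite. -/
theorem strong_mixing_of_construction (A : ℕ → List Bool) (b : ℕ → ℕ)
    (hA1 : A 1 = [true])
    (hArec : ∀ n : ℕ, 1 ≤ n →
      A (n + 1) = A n ++ List.replicate (b n) false ++ A n ++ List.replicate n false ++ A n)
    (hb : ∀ n : ℕ, 1 ≤ n → b n > 15 * (A n).length)
    (x : ℕ → Bool)
    (hx : ∀ n : ℕ, 1 ≤ n → ∀ k : ℕ, k < (A n).length → x k = (A n).getD k false) :
    ∀ U V : Set (ℕ → Bool), IsOpen U → IsOpen V →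
      (closure (orbitN x) ∩ U).Nonempty → (closure (orbitN x) ∩ V).Nonempty →
      ∃ N : ℕ, ∀ n : ℕ, N ≤ n →
        ∃ z ∈ closure (orbitN x), z ∈ U ∧ shiftN^[n] z ∈ V :=
  strong_mixing_of_construction_general A b hA1 hArec x hx
end

section
/- In the sequence x constructed by A_1 = "1", A_{n+1} = A_n 0^{b_n} A_n 0^{n} A_n with b_n > 15·|A_n| and x = lim A_n^∞, for every fixed n, the word A_n 0^{m} A_n occurs in x for all m ≥ n. Hence for the orbit closure X of x under the shift T, the return-time set N([A_n],[A_n]) = {k : [A_n] ∩ T^{-k}[A_n] ≠ ∅} is cofinite. -/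
/-- A word w occurs in x at place j. -/
def OccursAt (w : List Bool) (x : ℕ → Bool) (j : ℕ) : Prop :=
  ∀ k : ℕ, k < w.length → x (j + k) = w.getD k false

lemma shiftN_iterate (y : ℕ → Bool) (k : ℕ) : shiftN^[k] y = fun n => y (n + k) := by
  induction k generalizing y with
  | zero => rfl
  | succ k ih =>
    funext n
    simp [Function.iterate_succ_apply, ih, shiftN, Nat.add_assoc]

lemma shiftN_iterate_mem_orbitN (x : ℕ → Bool) (k : ℕ) : shiftN^[k] x ∈ orbitN x :=
  ⟨k, shiftN_iterate x k⟩

lemma occursAt_shiftN_iterate {w : List Bool} {y : ℕ → Bool} {k j : ℕ} :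
    OccursAt w (shiftN^[k] y) j ↔ OccursAt w y (j + k) := by
  simp only [OccursAt, shiftN_iterate, Nat.add_right_comm j]

lemma occursAt_append {u v : List Bool} {x : ℕ → Bool} {j : ℕ} :
    OccursAt (u ++ v) x j ↔ OccursAt u x j ∧ OccursAt v x (j + u.length) := by
  simp only [OccursAt, List.length_append]
  constructor
  · intro h
    refine ⟨fun k hk => ?_, fun k hk => ?_⟩
    · rw [h k (by omega), List.getD_append _ _ _ _ hk]
    · rw [Nat.add_assoc, h _ (by omega), List.getD_append_right _ _ _ _ (by omega),
        Nat.add_sub_cancel_left]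
  · rintro ⟨hu, hv⟩ k hk
    rcases Nat.lt_or_ge k u.length with hk' | hk'
    · rw [hu k hk', List.getD_append _ _ _ _ hk']
    · obtain ⟨i, rfl⟩ := Nat.exists_eq_add_of_le hk'
      rw [← Nat.add_assoc, hv i (by omega), List.getD_append_right _ _ _ _ (by omega),
        Nat.add_sub_cancel_left]

lemma OccursAt.of_isInfix {w W : List Bool} {x : ℕ → Bool} {j : ℕ} (h : OccursAt W x j)
    (hw : w <:+: W) : ∃ i, OccursAt w x i := by
  obtain ⟨s, t, rfl⟩ := hw
  exact ⟨_, (occursAt_append.1 (occursAt_append.1 h).1).2⟩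

lemma exists_return_of_occursAt {w : List Bool} {x : ℕ → Bool} {j k : ℕ}
    (h₀ : OccursAt w x j) (hk : OccursAt w x (j + k)) :
    ∃ z ∈ closure (orbitN x), OccursAt w z 0 ∧ OccursAt w (shiftN^[k] z) 0 := by
  refine ⟨shiftN^[j] x, subset_closure (shiftN_iterate_mem_orbitN x j), ?_, ?_⟩
  · rwa [occursAt_shiftN_iterate, Nat.zero_add]
  · rwa [← Function.iterate_add_apply, occursAt_shiftN_iterate, Nat.zero_add, Nat.add_comm]

section Construction

variable {A : ℕ → List Bool} {b : ℕ → ℕ}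
  (hArec : ∀ n : ℕ, 1 ≤ n →
    A (n + 1) = A n ++ List.replicate (b n) false ++ A n ++ List.replicate n false ++ A n)
include hArec

lemma isPrefix_isSuffix_of_le {n m : ℕ} (hn : 1 ≤ n) (hnm : n ≤ m) :
    A n <+: A m ∧ A n <:+ A m := by
  induction m, hnm using Nat.le_induction with
  | base => exact ⟨List.prefix_refl _, List.suffix_refl _⟩
  | succ m hnm ih =>
    rw [hArec m (hn.trans hnm)]
    exact ⟨ih.1.trans (by simp only [List.append_assoc]; exact List.prefix_append _ _),
      ih.2.trans (List.suffix_append _ _)⟩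

lemma isInfix_succ_of_le {n m : ℕ} (hn : 1 ≤ n) (hnm : n ≤ m) :
    A n ++ List.replicate m false ++ A n <:+: A (m + 1) := by
  obtain ⟨⟨t, ht⟩, ⟨s, hs⟩⟩ := isPrefix_isSuffix_of_le hArec hn hnm
  have hsplit : A (m + 1) =
      A m ++ List.replicate (b m) false ++ (s ++ A n) ++ List.replicate m false ++ (A n ++ t) := by
    rw [hArec m (hn.trans hnm), hs, ht]
  exact ⟨A m ++ List.replicate (b m) false ++ s, t, by simp only [hsplit, List.append_assoc]⟩

end Construction

theorem return_times_cofinite_of_construction_general (A : ℕ → List Bool) (b : ℕ → ℕ)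
    (hArec : ∀ n : ℕ, 1 ≤ n →
      A (n + 1) = A n ++ List.replicate (b n) false ++ A n ++ List.replicate n false ++ A n)
    (x : ℕ → Bool)
    (hx : ∀ n : ℕ, 1 ≤ n → ∀ k : ℕ, k < (A n).length → x k = (A n).getD k false) :
    (∀ n : ℕ, 1 ≤ n → ∀ m : ℕ, n ≤ m →
      ∃ j : ℕ, OccursAt (A n ++ List.replicate m false ++ A n) x j) ∧
    (∀ n : ℕ, 1 ≤ n → {k : ℕ | ¬ ∃ z ∈ closure (orbitN x),
        OccursAt (A n) z 0 ∧ OccursAt (A n) (shiftN^[k] z) 0}.Finite) := by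
  have occurs : ∀ n : ℕ, 1 ≤ n → ∀ m : ℕ, n ≤ m →
      ∃ j : ℕ, OccursAt (A n ++ List.replicate m false ++ A n) x j := by
    intro n hn m hnm
    have hprefix : OccursAt (A (m + 1)) x 0 := fun k hk => by
      rw [Nat.zero_add, hx (m + 1) (by omega) k hk]
    exact hprefix.of_isInfix (isInfix_succ_of_le hArec hn hnm)
  refine ⟨occurs, fun n hn => (Set.finite_Iio ((A n).length + n)).subset fun k hk => ?_⟩
  by_contra hlarge
  rw [Set.mem_Iio, not_lt] at hlarge
  obtain ⟨m, rfl⟩ := Nat.exists_eq_add_of_le (le_of_add_le_left hlarge)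
  obtain ⟨j, hj⟩ := occurs n hn m (by omega)
  obtain ⟨hleft, hright⟩ := occursAt_append.1 hj
  refine hk (exists_return_of_occursAt (occursAt_append.1 hleft).1 ?_)
  simpa only [List.length_append, List.length_replicate, Nat.add_assoc] using hright

/-- For the word construction A₁ = 1, A_{n+1} = A_n 0^{b_n} A_n 0^{n} A_n with
b_n > 15|A_n| and x = lim A_n^∞: for each n, the word A_n 0^m A_n occurs in x for
every m ≥ n, and hence the return-time set N([A_n],[A_n]) for the orbit closure X
is cofinite. -/
theorem return_times_cofinite_of_construction (A : ℕ → List Bool) (b : ℕ → ℕ)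
    (hA1 : A 1 = [true])
    (hArec : ∀ n : ℕ, 1 ≤ n →
      A (n + 1) = A n ++ List.replicate (b n) false ++ A n ++ List.replicate n false ++ A n)
    (hb : ∀ n : ℕ, 1 ≤ n → b n > 15 * (A n).length)
    (x : ℕ → Bool)
    (hx : ∀ n : ℕ, 1 ≤ n → ∀ k : ℕ, k < (A n).length → x k = (A n).getD k false) :
    (∀ n : ℕ, 1 ≤ n → ∀ m : ℕ, n ≤ m →
      ∃ j : ℕ, OccursAt (A n ++ List.replicate m false ++ A n) x j) ∧
    (∀ n : ℕ, 1 ≤ n → {k : ℕ | ¬ ∃ z ∈ closure (orbitN x),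
        OccursAt (A n) z 0 ∧ OccursAt (A n) (shiftN^[k] z) 0}.Finite) :=
  return_times_cofinite_of_construction_general A b hArec x hx
end
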